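/- Let d ≥ 1, M ≥ 1, let I_1,…,I_d and R_1,…,R_{d+1} be positive integers, and for each sample index m ∈ {1,…,M} and each mode i ∈ {1,…,d} let X_m^{(i)} ∈ ℝ^{R_i × I_i × R_{i+1}} be the i-th TT-core of the m-th sample (all samples having the same TT-ranks R_1,…,R_{d+1}). For each mode i let k_i : ℝ^{I_i} × ℝ^{I_i} → ℝ be a positive semidefinite kernel. Define the K-STTM-Sum kernel matrix G ∈ ℝ^{M×M} by G(a,b) = Σ_{r ∈ ∏_{i=1}^{d+1}{1,…,R_i}} Σ_{r̂ ∈ ∏_{i=1}^{d+1}{1,…,R_i}} Σ_{i=1}^{d} k_i( X_a^{(i)}(r_i,·,r_{i+1}), X_b^{(i)}(r̂_i,·,r̂_{i+1}) ). Then G is a symmetric positive semidefinite matrix. -/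

import Mathlib

/-!
The kernel matrix is the sum over the modes `i` of `(a, b) ↦ ∑ r, ∑ r', kᵢ(x_{a,r}, x_{b,r'})`.
Each of these is obtained from the Gram matrix `K` of `kᵢ` on the family of all fibers `x_{a,r}`,
indexed by sample and rank multi-index, by summing out the rank index, i.e. it is `B K Bᴴ` for the
0/1 matrix `B a (b, r) = [a = b]`. Congruences and sums of positive semidefinite matrices are
positive semidefinite.
-/

namespace Matrix

variable {R : Type*} [Ring R] [PartialOrder R] [StarRing R]

theorem posSemidef_gram_of_forall_fin {α ι : Type*} [Fintype ι] {k : α → α → R}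
    (hk : ∀ (m : ℕ) (v : Fin m → α), (of fun a b : Fin m => k (v a) (v b)).PosSemidef)
    (v : ι → α) : (of fun a b : ι => k (v a) (v b)).PosSemidef := by
  convert (hk _ (v ∘ (Fintype.equivFin ι).symm)).submatrix (Fintype.equivFin ι) using 1
  ext a b
  simp

theorem PosSemidef.sum_snd {ι κ : Type*} [Fintype ι] [Fintype κ]
    {K : Matrix (ι × κ) (ι × κ) R} (hK : K.PosSemidef) :
    (of fun a b : ι => ∑ r, ∑ r', K (a, r) (b, r')).PosSemidef := by
  classical
  let B : Matrix ι (ι × κ) R := of fun a p => if p.1 = a then 1 else 0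
  convert hK.mul_mul_conjTranspose_same B using 1
  ext a b
  simp only [B, of_apply, mul_apply, conjTranspose_apply, apply_ite star, star_one, star_zero,
    ite_mul, mul_ite, one_mul, zero_mul, mul_one, mul_zero, Fintype.sum_prod_type,
    Finset.sum_comm (γ := ι), Finset.sum_ite_eq', Finset.mem_univ, if_true]
  exact Finset.sum_comm

end Matrix

theorem ksttm_sum_kernel_posSemidef_general
    (d M : ℕ)
    (I : Fin d → ℕ) (R : Fin (d + 1) → ℕ)
    (X : Fin M → (i : Fin d) → Fin (R i.castSucc) → Fin (I i) → Fin (R i.succ) → ℝ)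
    (k : (i : Fin d) → (Fin (I i) → ℝ) → (Fin (I i) → ℝ) → ℝ)
    (hpsd : ∀ (i : Fin d) (m : ℕ) (v : Fin m → (Fin (I i) → ℝ)),
      (Matrix.of fun a b : Fin m => k i (v a) (v b)).PosSemidef) :
    (Matrix.of fun a b : Fin M =>
      ∑ r : (j : Fin (d + 1)) → Fin (R j), ∑ r' : (j : Fin (d + 1)) → Fin (R j),
        ∑ i : Fin d,
          k i (fun j => X a i (r i.castSucc) j (r i.succ))
              (fun j => X b i (r' i.castSucc) j (r' i.succ))).PosSemidef := by
  let fiber (i : Fin d) (p : Fin M × ((j : Fin (d + 1)) → Fin (R j))) : Fin (I i) → ℝ :=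
    fun j => X p.1 i (p.2 i.castSucc) j (p.2 i.succ)
  have hmode (i : Fin d) : (Matrix.of fun a b : Fin M =>
      ∑ r, ∑ r', k i (fiber i (a, r)) (fiber i (b, r'))).PosSemidef :=
    (Matrix.posSemidef_gram_of_forall_fin (hpsd i) (fiber i)).sum_snd
  convert Matrix.posSemidef_sum Finset.univ fun i _ => hmode i using 1
  ext a b
  simp only [Matrix.of_apply, Matrix.sum_apply, fiber]
  exact (Finset.sum_congr rfl fun r _ => Finset.sum_comm).trans Finset.sum_comm

/-- **K-STTM-Sum kernel validity.**
Given `M` samples, each represented as a tensor train with cores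
`X m i : Fin (R i.castSucc) → Fin (I i) → Fin (R i.succ) → ℝ` (all samples sharing the same
TT-ranks `R`), and given for each mode `i` a positive semidefinite kernel
`k i : (Fin (I i) → ℝ) → (Fin (I i) → ℝ) → ℝ` (symmetric, with PSD Gram matrices on every
finite family), the K-STTM-Sum kernel matrix
`G a b = ∑_{r, r̂} ∑_i k i (X a i (r_i, ·, r_{i+1})) (X b i (r̂_i, ·, r̂_{i+1}))`
is a (symmetric) positive semidefinite matrix. -/
theorem ksttm_sum_kernel_posSemidef
    (d M : ℕ) (hd : 1 ≤ d) (hM : 1 ≤ M)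
    (I : Fin d → ℕ) (R : Fin (d + 1) → ℕ)
    (hI : ∀ i, 1 ≤ I i) (hR : ∀ i, 1 ≤ R i)
    (X : Fin M → (i : Fin d) → Fin (R i.castSucc) → Fin (I i) → Fin (R i.succ) → ℝ)
    (k : (i : Fin d) → (Fin (I i) → ℝ) → (Fin (I i) → ℝ) → ℝ)
    (hsymm : ∀ (i : Fin d) (x y : Fin (I i) → ℝ), k i x y = k i y x)
    (hpsd : ∀ (i : Fin d) (m : ℕ) (v : Fin m → (Fin (I i) → ℝ)),
      (Matrix.of fun a b : Fin m => k i (v a) (v b)).PosSemidef) :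
    (Matrix.of fun a b : Fin M =>
      ∑ r : (j : Fin (d + 1)) → Fin (R j), ∑ r' : (j : Fin (d + 1)) → Fin (R j),
        ∑ i : Fin d,
          k i (fun j => X a i (r i.castSucc) j (r i.succ))
              (fun j => X b i (r' i.castSucc) j (r' i.succ))).PosSemidef :=
  ksttm_sum_kernel_posSemidef_general d M I R X k hpsd
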